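/- arXiv:0905.0380 — 3 statements merged into one kernel-verified Lean document; each statement's English description precedes it below -/
import Mathlib

section
/- Let C₂ be a cyclic group of order 2, let A₄ be the alternating group on four letters, let V₄ be its unique subgroup of order 4, and let C be any subgroup of A₄ of order 2. Then the subgroups C₂ × V₄ and C₂ × C of the group C₂ × A₄ are NOT jump equivalent, even though their images V₄ and C modulo the normal subgroup N = C₂ × {1} are jump equivalent in A₄ ≅ (C₂ × A₄)/N. Hence jump equivalence of H/N and H'/N in G/N does not imply jump equivalence of H and H' in G. -/
/-- A subset `S` of a group is conjugation-stable if `gSg⁻¹ = S` for all `g`. -/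
def ConjStable {G : Type*} [Group G] (S : Set G) : Prop :=
  ∀ g : G, (fun x => g * x * g⁻¹) '' S = S

/-- Subgroups `H, H'` of `G` are jump equivalent if for all conjugation-stable
subsets `S, T` of `G`, `⟨H ∩ S⟩ = ⟨H ∩ T⟩ ↔ ⟨H' ∩ S⟩ = ⟨H' ∩ T⟩`. -/
def JumpEquivalent {G : Type*} [Group G] (H H' : Subgroup G) : Prop :=
  ∀ S T : Set G, ConjStable S → ConjStable T →
    (Subgroup.closure ((H : Set G) ∩ S) = Subgroup.closure ((H : Set G) ∩ T) ↔
     Subgroup.closure ((H' : Set G) ∩ S) = Subgroup.closure ((H' : Set G) ∩ T))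

/-- Subgroups `H, H'` of `G` are order equivalent if `#⟨H ∩ S⟩ = #⟨H' ∩ S⟩` for every
conjugation-stable subset `S` of `G`. -/
def OrderEquivalent {G : Type*} [Group G] (H H' : Subgroup G) : Prop :=
  ∀ S : Set G, ConjStable S →
    Nat.card (Subgroup.closure ((H : Set G) ∩ S)) =
      Nat.card (Subgroup.closure ((H' : Set G) ∩ S))

/-- Subgroups `H, H'` of `G` are Gassmann-Sunada equivalent if `#(H ∩ S) = #(H' ∩ S)` for
every conjugation-stable subset `S` of `G`. -/
def GassmannEquivalent {G : Type*} [Group G] (H H' : Subgroup G) : Prop :=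
  ∀ S : Set G, ConjStable S →
    Set.ncard ((H : Set G) ∩ S) = Set.ncard ((H' : Set G) ∩ S)

/-- Subgroups `H, H'` of `G` are Kronecker equivalent if for every conjugation-stable subset
`S` of `G`, `H ∩ S = ∅ ↔ H' ∩ S = ∅`. -/
def KroneckerEquivalent {G : Type*} [Group G] (H H' : Subgroup G) : Prop :=
  ∀ S : Set G, ConjStable S → ((H : Set G) ∩ S = ∅ ↔ (H' : Set G) ∩ S = ∅)

/-!
Write `C₂ = {1, ε}`. All involutions of `A₄` are conjugate, and `V₄` and `C` are nontrivial
groups of exponent 2, so for conjugation-stable `S` the groups `⟨V₄ ∩ S⟩` and `⟨C ∩ S⟩` are both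
the whole subgroup or both trivial, according as `S` meets the involution class or not.

Upstairs, let `S` be the set of pairs `(ε, x)` and `T ⊇ S` the set of pairs `(a, x)`, with
`x` an involution of `A₄`. Taking involutions `x, y, xy` of `V₄`, the product
`(ε, x)(ε, y)(ε, xy) = (ε, 1)` shows `⟨(C₂ × V₄) ∩ S⟩ = C₂ × V₄ = ⟨(C₂ × V₄) ∩ T⟩`. But if
`C = {1, d}`, then `⟨(C₂ × C) ∩ S⟩ = ⟨(ε, d)⟩` has order 2 and misses `(1, d) ∈ T`.
-/

def involutions (G : Type*) [Group G] : Set G := {x | x ^ 2 = 1 ∧ x ≠ 1}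

section ConjStable

variable {G : Type*} [Group G]

theorem conjStable_iff {S : Set G} : ConjStable S ↔ ∀ g, ∀ x ∈ S, g * x * g⁻¹ ∈ S := by
  refine ⟨fun hS g x hx => hS g ▸ Set.mem_image_of_mem _ hx, fun hS g => ?_⟩
  refine (Set.image_subset_iff.mpr fun x hx => hS g x hx).antisymm fun x hx => ?_
  exact ⟨g⁻¹ * x * g, by simpa using hS g⁻¹ x hx, by group⟩

theorem ConjStable.mem_of_isConj {S : Set G} (hS : ConjStable S) {x y : G} (hxy : IsConj x y)
    (hx : x ∈ S) : y ∈ S := by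
  obtain ⟨g, rfl⟩ := isConj_iff.mp hxy
  exact conjStable_iff.mp hS g x hx

theorem conjStable_of_commGroup {A : Type*} [CommGroup A] (S : Set A) : ConjStable S :=
  conjStable_iff.mpr fun g x hx => by simpa [mul_comm g x] using hx

theorem ConjStable.prod {K : Type*} [Group K] {S : Set G} {T : Set K} (hS : ConjStable S)
    (hT : ConjStable T) : ConjStable (S ×ˢ T) :=
  conjStable_iff.mpr fun g x hx =>
    ⟨conjStable_iff.mp hS g.1 x.1 hx.1, conjStable_iff.mp hT g.2 x.2 hx.2⟩

theorem conjStable_involutions : ConjStable (involutions G) :=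
  conjStable_iff.mpr fun g x ⟨hx2, hx1⟩ => by
    refine ⟨by rw [conj_pow, hx2, mul_one, mul_inv_cancel], ?_⟩
    rwa [Ne, conj_eq_one_iff]

end ConjStable

section JumpEquivalent

variable {G : Type*} [Group G]

open Classical in
theorem closure_inter_eq_ite_of_forall_isConj {H : Subgroup G} {x : G}
    (hx : ∀ h ∈ H, h ≠ 1 → IsConj x h) {S : Set G} (hS : ConjStable S) :
    Subgroup.closure ((H : Set G) ∩ S) = if x ∈ S then H else ⊥ := by
  split_ifs with hxS
  · refine le_antisymm ((Subgroup.closure_le _).mpr Set.inter_subset_left) fun h hh => ?_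
    by_cases h1 : h = 1
    · exact h1 ▸ Subgroup.one_mem _
    · exact Subgroup.subset_closure ⟨hh, hS.mem_of_isConj (hx h hh h1) hxS⟩
  · refine (Subgroup.closure_eq_bot_iff).mpr fun h ⟨hh, hhS⟩ => ?_
    by_contra h1
    exact hxS (hS.mem_of_isConj (hx h hh h1).symm hhS)

theorem jumpEquivalent_of_forall_isConj {H H' : Subgroup G} (x : G) (hH : H ≠ ⊥) (hH' : H' ≠ ⊥)
    (hxH : ∀ h ∈ H, h ≠ 1 → IsConj x h) (hxH' : ∀ h ∈ H', h ≠ 1 → IsConj x h) :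
    JumpEquivalent H H' := by
  intro S T hS hT
  rw [closure_inter_eq_ite_of_forall_isConj hxH hS, closure_inter_eq_ite_of_forall_isConj hxH hT,
    closure_inter_eq_ite_of_forall_isConj hxH' hS, closure_inter_eq_ite_of_forall_isConj hxH' hT]
  split_ifs
  · simp
  · exact iff_of_false hH hH'
  · exact iff_of_false (Ne.symm hH) (Ne.symm hH')
  · simp

end JumpEquivalent

section Subgroup

variable {G : Type*} [Group G]

theorem Subgroup.exists_ne_one_ne_one_of_two_lt_natCard {H : Subgroup G} (h : 2 < Nat.card H) :
    ∃ a ∈ H, ∃ b ∈ H, a ≠ 1 ∧ b ≠ 1 ∧ a ≠ b := by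
  rw [← SetLike.coe_sort_coe, Nat.card_coe_set_eq] at h
  obtain ⟨a, ha, b, hb, c, hc, hab, hac, hbc⟩ :=
    (Set.two_lt_ncard (Set.finite_of_ncard_pos (by omega))).mp h
  by_cases ha1 : a = 1
  · subst ha1
    exact ⟨b, hb, c, hc, hab.symm, hac.symm, hbc⟩
  by_cases hb1 : b = 1
  · subst hb1
    exact ⟨a, ha, c, hc, ha1, hbc.symm, hac⟩
  exact ⟨a, ha, b, hb, ha1, hb1, hab⟩

theorem Subgroup.pow_eq_one_of_natCard_eq {H : Subgroup G} {n : ℕ} (hn : Nat.card H = n) {x : G}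
    (hx : x ∈ H) : x ^ n = 1 :=
  orderOf_dvd_iff_pow_eq_one.mp (hn ▸ H.orderOf_dvd_natCard hx)

theorem eq_one_or_eq_of_mem_zpowers {a x : G} (ha : a ^ 2 = 1) (hx : x ∈ Subgroup.zpowers a) :
    x = 1 ∨ x = a := by
  obtain ⟨k, rfl⟩ := Subgroup.mem_zpowers_iff.mp hx
  rcases Int.even_or_odd' k with ⟨m, rfl | rfl⟩
  · simp [zpow_mul, ha]
  · simp [zpow_add, zpow_mul, ha]

end Subgroup

section SignedInvolutions

variable {K : Type*} [Group K]

local notation "C₂" => Multiplicative (ZMod 2)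
local notation "ε" => Multiplicative.ofAdd (1 : ZMod 2)

theorem closure_top_prod_inter_signed_involutions {V : Subgroup K} (hV : ∀ v ∈ V, v ^ 2 = 1)
    {a b : K} (ha : a ∈ V) (hb : b ∈ V) (ha1 : a ≠ 1) (hb1 : b ≠ 1) (hab : a ≠ b) :
    Subgroup.closure (((⊤ : Subgroup C₂).prod V : Set (C₂ × K)) ∩ {ε} ×ˢ involutions K) =
      (⊤ : Subgroup C₂).prod V := by
  set L := Subgroup.closure (((⊤ : Subgroup C₂).prod V : Set (C₂ × K)) ∩ {ε} ×ˢ involutions K)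
  refine le_antisymm ((Subgroup.closure_le _).mpr Set.inter_subset_left) ?_
  have hsigned : ∀ v ∈ V, v ≠ 1 → (ε, v) ∈ L := fun v hv hv1 =>
    Subgroup.subset_closure ⟨Subgroup.mem_prod.mpr ⟨Subgroup.mem_top _, hv⟩, rfl, hV v hv, hv1⟩
  have hab1 : a * b ≠ 1 := fun h =>
    hab ((eq_inv_of_mul_eq_one_left h).trans (inv_eq_of_mul_eq_one_right (sq b ▸ hV b hb)))
  have hsign : ∀ s : C₂, (s, (1 : K)) ∈ L := by
    have hε : ((ε, 1) : C₂ × K) = (ε, a) * (ε, b) * (ε, a * b) :=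
      Prod.ext (show ε = ε * ε * ε by decide) (sq (a * b) ▸ hV _ (mul_mem ha hb)).symm
    have hs : ∀ s : C₂, s = 1 ∨ s = ε := by decide
    intro s
    rcases hs s with rfl | rfl
    · exact L.one_mem
    · rw [hε]
      exact mul_mem (mul_mem (hsigned a ha ha1) (hsigned b hb hb1))
        (hsigned _ (mul_mem ha hb) hab1)
  rintro ⟨s, v⟩ hp
  by_cases hv1 : v = 1
  · exact hv1 ▸ hsign s
  · have hsv : ((s, v) : C₂ × K) = (s * ε⁻¹, 1) * (ε, v) := by simp
    rw [hsv]
    exact mul_mem (hsign _) (hsigned v (Subgroup.mem_prod.mp hp).2 hv1)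

theorem one_prod_notMem_closure_top_prod_inter_signed_involutions {C : Subgroup K} {d : K}
    (hd : d ∈ involutions K) (hC : ∀ c ∈ C, c ≠ 1 → c = d) :
    ((1, d) : C₂ × K) ∉
      Subgroup.closure (((⊤ : Subgroup C₂).prod C : Set (C₂ × K)) ∩ {ε} ×ˢ involutions K) := by
  have hle : Subgroup.closure (((⊤ : Subgroup C₂).prod C : Set (C₂ × K)) ∩ {ε} ×ˢ involutions K) ≤
      Subgroup.zpowers (ε, d) := by
    refine (Subgroup.closure_le _).mpr ?_
    rintro ⟨s, c⟩ ⟨hp, rfl, hc⟩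
    rw [hC c (Subgroup.mem_prod.mp hp).2 hc.2]
    exact Subgroup.mem_zpowers _
  intro hmem
  have hsq : ((ε, d) : C₂ × K) ^ 2 = 1 := Prod.ext (show ε ^ 2 = 1 by decide) hd.1
  rcases eq_one_or_eq_of_mem_zpowers hsq (hle hmem) with h | h
  · exact hd.2 (congrArg Prod.snd h)
  · exact absurd (congrArg Prod.fst h) (show (1 : C₂) ≠ ε by decide)

theorem not_jumpEquivalent_top_prod {V C : Subgroup K} (hV : ∀ v ∈ V, v ^ 2 = 1)
    (hV2 : 2 < Nat.card V) (hC : Nat.card C = 2) :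
    ¬ JumpEquivalent ((⊤ : Subgroup C₂).prod V) ((⊤ : Subgroup C₂).prod C) := by
  obtain ⟨a, ha, b, hb, ha1, hb1, hab⟩ := V.exists_ne_one_ne_one_of_two_lt_natCard hV2
  obtain ⟨⟨d, hdC⟩, hd1, huniq⟩ := (Nat.card_eq_two_iff' 1).mp hC
  have hd : d ∈ involutions K := ⟨C.pow_eq_one_of_natCard_eq hC hdC, fun h => hd1 (Subtype.ext h)⟩
  have hCd : ∀ c ∈ C, c ≠ 1 → c = d := fun c hc hc1 =>
    congrArg Subtype.val (huniq ⟨c, hc⟩ fun h => hc1 (congrArg Subtype.val h))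
  have hS : ConjStable ({ε} ×ˢ involutions K) :=
    (conjStable_of_commGroup _).prod conjStable_involutions
  have hT : ConjStable ((Set.univ : Set C₂) ×ˢ involutions K) :=
    (conjStable_of_commGroup _).prod conjStable_involutions
  have hVS := closure_top_prod_inter_signed_involutions hV ha hb ha1 hb1 hab
  have hVT : Subgroup.closure (((⊤ : Subgroup C₂).prod V : Set (C₂ × K)) ∩
      (Set.univ : Set C₂) ×ˢ involutions K) = (⊤ : Subgroup C₂).prod V :=
    le_antisymm ((Subgroup.closure_le _).mpr Set.inter_subset_left) <| hVS.ge.trans <|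
      Subgroup.closure_mono <|
        Set.inter_subset_inter_right _ (Set.prod_mono (Set.subset_univ _) le_rfl)
  intro hJ
  have hCST := (hJ _ _ hS hT).mp (hVS.trans hVT.symm)
  refine one_prod_notMem_closure_top_prod_inter_signed_involutions hd hCd (hCST ▸ ?_)
  exact Subgroup.subset_closure ⟨Subgroup.mem_prod.mpr ⟨Subgroup.mem_top _, hdC⟩, trivial, hd⟩

end SignedInvolutions

theorem alternatingGroup_four_sq_eq_one_of_pow_four_eq_one :
    ∀ x : alternatingGroup (Fin 4), x ^ 4 = 1 → x ^ 2 = 1 := by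
  decide

theorem alternatingGroup_four_isConj_of_mem_involutions :
    ∀ x ∈ involutions (alternatingGroup (Fin 4)), ∀ y ∈ involutions (alternatingGroup (Fin 4)),
      IsConj x y := by
  simp only [involutions, Set.mem_ofPred_eq, isConj_iff]
  decide

/-- with `V₄` the (unique) subgroup of order 4 of `A₄` and `C` any subgroup of
order 2, the subgroups `C₂ × V₄` and `C₂ × C` of `C₂ × A₄` are NOT jump equivalent, even
though `V₄` and `C` (their images modulo `N = C₂ × {1}`) are jump equivalent in
`A₄ ≅ (C₂ × A₄)/N`. -/
theorem not_jumpEquivalent_prod_of_jumpEquivalent_quotient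
    (V C : Subgroup ↥(alternatingGroup (Fin 4)))
    (hV : Nat.card V = 4) (hC : Nat.card C = 2) :
    ¬ JumpEquivalent ((⊤ : Subgroup (Multiplicative (ZMod 2))).prod V)
        ((⊤ : Subgroup (Multiplicative (ZMod 2))).prod C) ∧
      JumpEquivalent V C := by
  have hV2 : ∀ v ∈ V, v ^ 2 = 1 := fun v hv =>
    alternatingGroup_four_sq_eq_one_of_pow_four_eq_one v (V.pow_eq_one_of_natCard_eq hV hv)
  have hC2 : ∀ c ∈ C, c ^ 2 = 1 := fun _ => C.pow_eq_one_of_natCard_eq hC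
  obtain ⟨d, hdC, hd1⟩ := C.bot_or_exists_ne_one.resolve_left (by rintro rfl; simp at hC)
  have hconj {H : Subgroup ↥(alternatingGroup (Fin 4))} (hH : ∀ h ∈ H, h ^ 2 = 1) :
      ∀ h ∈ H, h ≠ 1 → IsConj d h := fun h hh h1 =>
    alternatingGroup_four_isConj_of_mem_involutions d ⟨hC2 d hdC, hd1⟩ h ⟨hH h hh, h1⟩
  refine ⟨not_jumpEquivalent_top_prod hV2 (by omega) hC, ?_⟩
  exact jumpEquivalent_of_forall_isConj d (by rintro rfl; simp at hV) (by rintro rfl; simp at hC)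
    (hconj hV2) (hconj hC2)
end

section
/- Let k be a finite field with q elements and let V be a k-vector space of finite dimension d with d ≥ 2 and (q,d) ≠ (2,2). Let v₀ ∈ V be a nonzero vector and φ : V → k a nonzero linear functional, and set H = {g ∈ GL(V) : g v₀ = v₀} and H' = {g ∈ GL(V) : φ ∘ g = φ}. In the affine group V ⋊ GL(V) (with multiplication (v,g)(v',g') = (v + g v', g g')), the subgroups V ⋊ H and V ⋊ H' are Gassmann-Sunada equivalent but NOT jump equivalent; that is, (V ⋊ GL(V), V ⋊ H, V ⋊ H') is a Gassmann-Sunada triple that is not a jump triple. -/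
/-!
For a subgroup `H` of a finite group `G`, double counting the pairs `(x, g)` with `g ∈ S` and
`x⁻¹ g x ∈ H` shows that `#(H ∩ S)` is determined by the numbers `#{x | x⁻¹ g x ∈ H}`. For the
preimages of subgroups of `GL(V)` under the linear-part map these numbers are `|V|` times the
ones computed in `GL(V)`, and for the stabiliser of a point they equal the order of the
stabiliser times the number of fixed points of `g` in its orbit. The orbits of `v₀` and `φ` are
the nonzero vectors and the nonzero functionals, whose fixed points under `g` are the nonzero
elements of `ker (g - 1)` and of `ker (g - 1)ᵀ`, subspaces of the same dimension.

Let `S` be the set of affine maps with a fixed point and `N` the translations. If `ψ v₀ = 0` and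
`ψ b ≠ 1`, then `m x = x - ψ x • b` fixes `v₀` and `t_b m` has a fixed point, so every translation
`t_b = (t_b m) m⁻¹` lies in `⟨A ∩ S⟩`. A nonzero such `ψ` exists because for `(q, d) ≠ (2, 2)`
more than two functionals vanish at `v₀`, while two distinct nonzero ones with value `1` at `b`
would differ by a nonzero one with value `0` there.
Hence `⟨A ∩ S⟩ = ⟨A ∩ (S ∪ N)⟩`. On the other side an element of `A'` with a fixed point
preserves `φ` as a function, so a translation `t_a` with `φ a ≠ 0`, which lies in `A' ∩ N`, is
not in `⟨A' ∩ S⟩`.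
-/

open MulAction Module

section ConjugationCounts

variable {G : Type*} [Group G]

theorem ConjStable.conj_mem {S : Set G} (hS : ConjStable S) (g : G) {x : G} (hx : x ∈ S) :
    g * x * g⁻¹ ∈ S :=
  hS g ▸ Set.mem_image_of_mem _ hx

theorem conjStable_of_conj_mem {S : Set G} (h : ∀ g x, x ∈ S → g * x * g⁻¹ ∈ S) :
    ConjStable S := by
  refine fun g => Set.Subset.antisymm (Set.image_subset_iff.mpr fun x hx => h g x hx) ?_
  intro x hx
  exact ⟨g⁻¹ * x * g, by simpa using h g⁻¹ x hx, by group⟩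

theorem Subgroup.Normal.conjStable {N : Subgroup G} (hN : N.Normal) : ConjStable (N : Set G) :=
  conjStable_of_conj_mem fun g _ hx => hN.conj_mem _ hx g

theorem ConjStable.union {S T : Set G} (hS : ConjStable S) (hT : ConjStable T) :
    ConjStable (S ∪ T) := fun g => by rw [Set.image_union, hS g, hT g]

/-- `|H|` times the value at `g` of the permutation character of `G` on `G ⧸ H`. -/
noncomputable def conjCount (H : Subgroup G) (g : G) : ℕ :=
  Nat.card {x : G // x⁻¹ * g * x ∈ H}

theorem card_mul_ncard_inter_eq_card_sigma (H : Subgroup G) {S : Set G} (hS : ConjStable S) :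
    Nat.card G * ((H : Set G) ∩ S).ncard = Nat.card (Σ g : S, {x : G // x⁻¹ * g * x ∈ H}) := by
  rw [← Nat.card_coe_set_eq, ← Nat.card_prod]
  refine Nat.card_congr
    { toFun := fun p => ⟨⟨p.1 * p.2 * p.1⁻¹, hS.conj_mem p.1 p.2.2.2⟩, p.1,
        by simpa [mul_assoc] using p.2.2.1⟩
      invFun := fun q => (q.2, ⟨(q.2 : G)⁻¹ * q.1 * q.2, q.2.2,
        by simpa using hS.conj_mem (q.2 : G)⁻¹ q.1.2⟩)
      left_inv := fun p => by ext <;> simp [mul_assoc]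
      right_inv := fun q => by ext <;> simp [mul_assoc] }

theorem gassmannEquivalent_of_conjCount_eq [Finite G] {H H' : Subgroup G}
    (h : ∀ g, conjCount H g = conjCount H' g) : GassmannEquivalent H H' := by
  intro S hS
  have e : (Σ g : S, {x : G // x⁻¹ * g * x ∈ H}) ≃ Σ g : S, {x : G // x⁻¹ * g * x ∈ H'} :=
    Equiv.sigmaCongrRight fun g => (Finite.card_eq.mp (h g)).some
  refine Nat.eq_of_mul_eq_mul_left (Nat.card_pos (α := G)) ?_
  rw [card_mul_ncard_inter_eq_card_sigma H hS, card_mul_ncard_inter_eq_card_sigma H' hS,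
    Nat.card_congr e]

theorem Nat.card_subtype_fst_eq_of_equiv_prod {Γ X K : Type*} (e : Γ ≃ X × K) (P : X → Prop) :
    Nat.card {u : Γ // P (e u).1} = Nat.card {x : X // P x} * Nat.card K := by
  rw [← Nat.card_prod]
  exact Nat.card_congr
    ((e.subtypeEquiv fun _ => Iff.rfl).trans Equiv.prodSubtypeFstEquivSubtypeProd)

theorem conjCount_comap {Q : Type*} [Group Q] (f : G →* Q) (hf : Function.Surjective f)
    (H : Subgroup Q) (g : G) :
    conjCount (H.comap f) g = conjCount H (f g) * Nat.card f.ker := by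
  let e : G ≃ Q × f.ker := Subgroup.groupEquivQuotientProdSubgroup.trans
    (Equiv.prodCongr (QuotientGroup.quotientKerEquivOfSurjective f hf).toEquiv (Equiv.refl _))
  have he : ∀ x, (e x).1 = f x := fun _ => rfl
  simpa [conjCount, he] using
    Nat.card_subtype_fst_eq_of_equiv_prod e (fun y => y⁻¹ * f g * y ∈ H)

theorem conjCount_stabilizer {X : Type*} [MulAction G X] (x₀ : X) (g : G) :
    conjCount (stabilizer G x₀) g
      = (orbit G x₀ ∩ fixedBy X g).ncard * Nat.card (stabilizer G x₀) := by
  let e := (orbitProdStabilizerEquivGroup G x₀).symm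
  have he : ∀ y, ((e y).1 : X) = y • x₀ := fun _ => rfl
  have hmem : ∀ y : G, y⁻¹ * g * y ∈ stabilizer G x₀ ↔ ((e y).1 : X) ∈ fixedBy X g := by
    intro y
    rw [he, mem_stabilizer_iff, mem_fixedBy, mul_smul, mul_smul, inv_smul_eq_iff]
  rw [conjCount, Nat.card_congr (Equiv.subtypeEquivRight hmem),
    Nat.card_subtype_fst_eq_of_equiv_prod e (fun ω => (ω : X) ∈ fixedBy X g),
    ← Nat.card_coe_set_eq, Nat.card_congr (Equiv.subtypeSubtypeEquivSubtypeInter _ _)]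
  rfl

theorem Subgroup.not_jumpEquivalent_of_subset_closure {A A' : Subgroup G} {S N : Set G}
    (hS : ConjStable S) (hN : ConjStable N) (hA : (A : Set G) ∩ N ⊆ closure ((A : Set G) ∩ S))
    {t : G} (htA' : t ∈ A') (htN : t ∈ N) (ht : t ∉ closure ((A' : Set G) ∩ S)) :
    ¬ JumpEquivalent A A' := by
  intro hJ
  have hAS : closure ((A : Set G) ∩ S) = closure ((A : Set G) ∩ (S ∪ N)) := by
    rw [Set.inter_union_distrib_left, closure_union, left_eq_sup, closure_le]
    exact hA
  refine ht ?_
  rw [(hJ S (S ∪ N) hS (hS.union hN)).1 hAS]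
  exact subset_closure ⟨htA', Or.inr htN⟩

end ConjugationCounts

theorem LinearEquiv.exists_apply_eq_of_ne_zero {K V : Type*} [DivisionRing K] [AddCommGroup V]
    [Module K V] {v w : V} (hv : v ≠ 0) (hw : w ≠ 0) : ∃ u : V ≃ₗ[K] V, u v = w := by
  obtain ⟨u, hu⟩ := Submodule.exists_linearEquiv_restrict_eq
    ((LinearEquiv.coord K V v hv).trans (LinearEquiv.toSpanNonzeroSingleton K V w hw))
  exact ⟨u, by
    simpa [LinearEquiv.coord_self] using (hu ⟨v, Submodule.mem_span_singleton_self v⟩).symm⟩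

abbrev contragredientAction {K V : Type*} [Field K] [AddCommGroup V] [Module K V] :
    MulAction (V ≃ₗ[K] V) (Dual K V) where
  smul u ψ := ψ ∘ₗ (u.symm : V →ₗ[K] V)
  one_smul _ := rfl
  mul_smul _ _ _ := rfl

attribute [local instance] contragredientAction

section GeneralLinear

variable {K V : Type*} [Field K] [AddCommGroup V] [Module K V]

theorem contragredient_smul_apply (u : V ≃ₗ[K] V) (ψ : Dual K V) (x : V) :
    (u • ψ) x = ψ (u.symm x) := rfl

theorem contragredient_smul_eq_iff_comp_eq (u : V ≃ₗ[K] V) (ψ : Dual K V) :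
    u • ψ = ψ ↔ ψ ∘ₗ (u : V →ₗ[K] V) = ψ := by
  simp only [LinearMap.ext_iff, contragredient_smul_apply, LinearMap.comp_apply,
    LinearEquiv.coe_coe]
  exact ⟨fun h x => by simpa using (h (u x)).symm, fun h x => by simpa using (h (u.symm x)).symm⟩

theorem orbit_linearEquiv_eq_setOf_ne_zero {v : V} (hv : v ≠ 0) :
    orbit (V ≃ₗ[K] V) v = {w | w ≠ 0} := by
  ext w
  refine ⟨?_, fun hw => ?_⟩
  · rintro ⟨u, rfl⟩
    exact (LinearEquiv.map_ne_zero_iff u).mpr hv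
  · obtain ⟨u, hu⟩ := LinearEquiv.exists_apply_eq_of_ne_zero (K := K) hv hw
    exact ⟨u, hu⟩

theorem orbit_contragredient_eq_setOf_ne_zero [FiniteDimensional K V] {φ : Dual K V}
    (hφ : φ ≠ 0) : orbit (V ≃ₗ[K] V) φ = {ψ | ψ ≠ 0} := by
  ext ψ
  refine ⟨?_, fun hψ => ?_⟩
  · rintro ⟨u, rfl⟩ h
    exact hφ (LinearMap.ext fun x => by
      simpa [contragredient_smul_apply] using LinearMap.congr_fun h (u x))
  · obtain ⟨U, hU⟩ := LinearEquiv.exists_apply_eq_of_ne_zero (K := K) hψ hφ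
    let u := (evalEquiv K V).trans (U.dualMap.trans (evalEquiv K V).symm)
    have hu : ∀ x, ψ (u x) = φ x := fun x => by
      simp [u, apply_evalEquiv_symm_apply, hU]
    exact ⟨u, LinearMap.ext fun x => by simp [contragredient_smul_apply, ← hu]⟩

theorem fixedBy_eq_ker (g : V ≃ₗ[K] V) :
    fixedBy V g = LinearMap.ker ((g : V →ₗ[K] V) - LinearMap.id) := by
  ext x
  simp [sub_eq_zero]

theorem fixedBy_contragredient_eq_ker (g : V ≃ₗ[K] V) :
    fixedBy (Dual K V) g = LinearMap.ker ((g : V →ₗ[K] V) - LinearMap.id).dualMap := by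
  ext ψ
  rw [mem_fixedBy, contragredient_smul_eq_iff_comp_eq, SetLike.mem_coe, LinearMap.mem_ker,
    LinearMap.dualMap_apply', LinearMap.comp_sub, LinearMap.comp_id, sub_eq_zero]

theorem LinearMap.finrank_ker_dualMap [FiniteDimensional K V] (f : V →ₗ[K] V) :
    finrank K (LinearMap.ker f.dualMap) = finrank K (LinearMap.ker f) := by
  have := LinearMap.finrank_range_add_finrank_ker f
  have := LinearMap.finrank_range_add_finrank_ker f.dualMap
  have := LinearMap.finrank_range_dualMap_eq_finrank_range f
  have : finrank K (Dual K V) = finrank K V := Subspace.dual_finrank_eq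
  omega

theorem ncard_setOf_ne_zero_inter {M : Type*} [AddCommGroup M] [Module K M] [Finite M]
    (W : Submodule K M) : ({x | x ≠ 0} ∩ (W : Set M)).ncard = Nat.card W - 1 := by
  have : {x | x ≠ 0} ∩ (W : Set M) = (W : Set M) \ {0} := by
    ext; simp [and_comm]
  rw [this, Set.ncard_sdiff_singleton_of_mem W.zero_mem, ← Nat.card_coe_set_eq]
  rfl

variable [Finite K] [FiniteDimensional K V]

theorem ncard_setOf_ne_zero_dual :
    {ψ : Dual K V | ψ ≠ 0}.ncard = {v : V | v ≠ 0}.ncard := by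
  have : Finite V := Module.finite_of_finite K
  have : Finite (Dual K V) := Module.finite_of_finite K
  have hV := ncard_setOf_ne_zero_inter (⊤ : Submodule K V)
  have hD := ncard_setOf_ne_zero_inter (⊤ : Submodule K (Dual K V))
  rw [Submodule.top_coe, Set.inter_univ, natCard_eq_pow_finrank (K := K), finrank_top] at hV hD
  rw [hV, hD, Subspace.dual_finrank_eq]

theorem card_stabilizer_contragredient_eq {v₀ : V} (hv₀ : v₀ ≠ 0) {φ : Dual K V} (hφ : φ ≠ 0) :
    Nat.card (stabilizer (V ≃ₗ[K] V) φ) = Nat.card (stabilizer (V ≃ₗ[K] V) v₀) := by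
  have : Finite V := Module.finite_of_finite K
  have hV := (stabilizer (V ≃ₗ[K] V) v₀).card_mul_index
  have hD := (stabilizer (V ≃ₗ[K] V) φ).card_mul_index
  rw [index_stabilizer, orbit_linearEquiv_eq_setOf_ne_zero hv₀] at hV
  rw [index_stabilizer, orbit_contragredient_eq_setOf_ne_zero hφ, ncard_setOf_ne_zero_dual] at hD
  exact Nat.eq_of_mul_eq_mul_right ((Set.ncard_pos (Set.toFinite _)).mpr ⟨v₀, hv₀⟩)
    (hD.trans hV.symm)

theorem conjCount_stabilizer_contragredient_eq {v₀ : V} (hv₀ : v₀ ≠ 0) {φ : Dual K V}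
    (hφ : φ ≠ 0) (g : V ≃ₗ[K] V) :
    conjCount (stabilizer (V ≃ₗ[K] V) φ) g = conjCount (stabilizer (V ≃ₗ[K] V) v₀) g := by
  have : Finite V := Module.finite_of_finite K
  have : Finite (Dual K V) := Module.finite_of_finite K
  rw [conjCount_stabilizer, conjCount_stabilizer, orbit_linearEquiv_eq_setOf_ne_zero hv₀,
    orbit_contragredient_eq_setOf_ne_zero hφ, fixedBy_eq_ker, fixedBy_contragredient_eq_ker,
    ncard_setOf_ne_zero_inter, ncard_setOf_ne_zero_inter, natCard_eq_pow_finrank (K := K),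
    natCard_eq_pow_finrank (K := K) (V := LinearMap.ker _), LinearMap.finrank_ker_dualMap,
    card_stabilizer_contragredient_eq hv₀ hφ]

end GeneralLinear

theorem two_lt_pow_pred {q d : ℕ} (hq : 2 ≤ q) (hd : 2 ≤ d) (h : ¬(q = 2 ∧ d = 2)) :
    2 < q ^ (d - 1) := by
  rcases Nat.lt_or_ge 2 d with hd' | hd'
  · calc 2 < 2 ^ 2 := by norm_num
      _ ≤ q ^ (d - 1) :=
        (Nat.pow_le_pow_left hq 2).trans (Nat.pow_le_pow_right (by omega) (by omega))
  · obtain rfl : d = 2 := by omega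
    simp only [Nat.add_one_sub_one, pow_one]
    omega

theorem Submodule.exists_mem_ne_zero_apply_ne_one {R M : Type*} [Ring R] [Nontrivial R]
    [AddCommGroup M] [Module R M] (W : Submodule R M) (ℓ : M →ₗ[R] R) (hW : 2 < Nat.card W) :
    ∃ w ∈ W, w ≠ 0 ∧ ℓ w ≠ 1 := by
  classical
  by_contra! h
  have hinj : Function.Injective fun w : W => decide ((w : M) = 0) := by
    intro w₁ w₂ hw
    by_contra hne
    have hsub := h _ (sub_mem w₁.2 w₂.2) (sub_ne_zero.mpr (Subtype.coe_ne_coe.mpr hne))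
    by_cases h₁ : (w₁ : M) = 0 <;> by_cases h₂ : (w₂ : M) = 0 <;> simp_all
  have : Finite W := Nat.finite_of_card_ne_zero (by omega)
  have := Nat.card_le_card_of_injective _ hinj
  simp at this
  omega

section Affine

variable {k V : Type*} [Field k] [AddCommGroup V] [Module k V]

theorem exists_dual_apply_eq_zero_ne_zero_apply_ne_one [Finite k] [FiniteDimensional k V]
    (h : 2 < Nat.card k ^ (finrank k V - 1)) (v₀ b : V) :
    ∃ ψ : Dual k V, ψ v₀ = 0 ∧ ψ ≠ 0 ∧ ψ b ≠ 1 := by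
  have hrank : finrank k V - 1 ≤ finrank k (LinearMap.ker (Dual.eval k V v₀)) := by
    have h₁ := (Dual.eval k V v₀).finrank_range_add_finrank_ker
    have h₂ := Submodule.finrank_le (LinearMap.range (Dual.eval k V v₀))
    rw [Subspace.dual_finrank_eq] at h₁
    rw [finrank_self] at h₂
    omega
  have : Finite (Dual k V) := Module.finite_of_finite k
  obtain ⟨ψ, hψv₀, hψ, hψb⟩ :=
    (LinearMap.ker (Dual.eval k V v₀)).exists_mem_ne_zero_apply_ne_one (Dual.eval k V b) <| by
      rw [natCard_eq_pow_finrank (K := k)]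
      exact h.trans_le (Nat.pow_le_pow_right Finite.card_pos hrank)
  exact ⟨ψ, hψv₀, hψ, hψb⟩

theorem exists_linearEquiv_apply_eq_self_add_apply_eq [Finite k] [FiniteDimensional k V]
    (h : 2 < Nat.card k ^ (finrank k V - 1)) (v₀ b : V) :
    ∃ (m : V ≃ₗ[k] V) (u : V), m v₀ = v₀ ∧ b + m u = u := by
  obtain ⟨ψ, hψv₀, hψ, hψb⟩ := exists_dual_apply_eq_zero_ne_zero_apply_ne_one h v₀ b
  obtain ⟨a, ha⟩ : ∃ a, ψ a ≠ 0 := by simpa using DFunLike.ne_iff.mp hψ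
  have hunit : IsUnit (1 + ψ (-b)) := by
    rw [map_neg, ← sub_eq_add_neg]
    exact (sub_ne_zero.mpr hψb.symm).isUnit
  refine ⟨LinearEquiv.dilatransvection hunit, (ψ a)⁻¹ • a, ?_, ?_⟩
  · simp [LinearEquiv.dilatransvection.apply, hψv₀]
  · simp [LinearEquiv.dilatransvection.apply, smul_smul, ha]

theorem AffineEquiv.linearHom_surjective :
    Function.Surjective (AffineEquiv.linearHom : (V ≃ᵃ[k] V) →* V ≃ₗ[k] V) :=
  fun u => ⟨u.toAffineEquiv, rfl⟩

theorem AffineEquiv.eq_constVAdd_of_linear_eq_one {f : V ≃ᵃ[k] V} (hf : f.linear = 1) :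
    f = AffineEquiv.constVAdd k V (f 0) := by
  ext v
  have := f.map_vadd 0 v
  simp_all [add_comm]

theorem conjStable_setOf_exists_apply_eq : ConjStable {f : V ≃ᵃ[k] V | ∃ x, f x = x} :=
  conjStable_of_conj_mem fun g f ⟨x, hx⟩ => ⟨g x, by simp [AffineEquiv.inv_def, hx]⟩

theorem constVAdd_mem_closure_inter_setOf_exists_apply_eq {A : Subgroup (V ≃ᵃ[k] V)} {v₀ : V}
    (hA : ∀ f : V ≃ᵃ[k] V, f.linear v₀ = v₀ → f ∈ A) {m : V ≃ₗ[k] V} (hm : m v₀ = v₀)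
    {b u : V} (hu : b + m u = u) :
    AffineEquiv.constVAdd k V b ∈ Subgroup.closure ((A : Set _) ∩ {f | ∃ x, f x = x}) := by
  have h₁ : AffineEquiv.constVAdd k V b * m.toAffineEquiv ∈ (A : Set _) ∩ {f | ∃ x, f x = x} :=
    ⟨hA _ hm, u, hu⟩
  have h₂ : m.toAffineEquiv ∈ (A : Set _) ∩ {f | ∃ x, f x = x} := ⟨hA _ hm, 0, map_zero m⟩
  simpa using mul_mem (Subgroup.subset_closure h₁) (inv_mem (Subgroup.subset_closure h₂))

theorem ker_linearHom_le_closure_inter_setOf_exists_apply_eq [Finite k]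
    [FiniteDimensional k V] (h : 2 < Nat.card k ^ (finrank k V - 1))
    {A : Subgroup (V ≃ᵃ[k] V)} {v₀ : V} (hA : ∀ f : V ≃ᵃ[k] V, f.linear v₀ = v₀ → f ∈ A) :
    (AffineEquiv.linearHom : (V ≃ᵃ[k] V) →* V ≃ₗ[k] V).ker
      ≤ Subgroup.closure ((A : Set _) ∩ {f | ∃ x, f x = x}) := fun f hf => by
  obtain ⟨m, u, hm, hu⟩ := exists_linearEquiv_apply_eq_self_add_apply_eq h v₀ (f 0)
  rw [AffineEquiv.eq_constVAdd_of_linear_eq_one hf]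
  exact constVAdd_mem_closure_inter_setOf_exists_apply_eq hA hm hu

def invariantSubgroup {X : Type*} (χ : V → X) : Subgroup (V ≃ᵃ[k] V) where
  carrier := {f | ∀ x, χ (f x) = χ x}
  one_mem' _ := rfl
  mul_mem' hf hg x := (hf _).trans (hg x)
  inv_mem' {f} hf x := by simpa [AffineEquiv.inv_def] using (hf (f.symm x)).symm

theorem mem_invariantSubgroup_of_apply_eq_self {φ : V →ₗ[k] k} {f : V ≃ᵃ[k] V}
    (hf : ∀ x, φ (f.linear x) = φ x) {x₀ : V} (hx₀ : f x₀ = x₀) :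
    f ∈ invariantSubgroup φ := fun x => by
  have hlin : f.linear (x - x₀) = f x - x₀ := by
    simpa [hx₀] using (f : V →ᵃ[k] V).linearMap_vsub x x₀
  simpa [hlin] using hf (x - x₀)

end Affine

/-- let `k` be a finite field with `q` elements and `V` a `k`-vector space of
dimension `d` with `d ≥ 2` and `(q,d) ≠ (2,2)`.  In the affine group of `V` (realized as the
group of affine self-equivalences of `V`), the subgroups `V ⋊ H` and `V ⋊ H'` — where `H` is
the `GL(V)`-stabilizer of a nonzero vector `v₀` and `H'` that of a nonzero functional `φ`, so
that `V ⋊ H = {f : f.linear v₀ = v₀}` and `V ⋊ H' = {f : φ ∘ f.linear = φ}` — are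
Gassmann-Sunada equivalent but NOT jump equivalent. -/
theorem gassmannEquivalent_not_jumpEquivalent_affine {k : Type*} [Field k] [Fintype k]
    {q d : ℕ} (hq : Fintype.card k = q)
    {V : Type*} [AddCommGroup V] [Module k V] [FiniteDimensional k V]
    (hd : Module.finrank k V = d) (hd2 : 2 ≤ d) (hqd : ¬(q = 2 ∧ d = 2))
    (v₀ : V) (hv₀ : v₀ ≠ 0) (φ : V →ₗ[k] k) (hφ : φ ≠ 0)
    (A A' : Subgroup (V ≃ᵃ[k] V))
    (hA : ∀ f : V ≃ᵃ[k] V, f ∈ A ↔ f.linear v₀ = v₀)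
    (hA' : ∀ f : V ≃ᵃ[k] V, f ∈ A' ↔ ∀ x : V, φ (f.linear x) = φ x) :
    GassmannEquivalent A A' ∧ ¬ JumpEquivalent A A' := by
  have : Finite V := Module.finite_of_finite k
  have : Finite (V ≃ᵃ[k] V) := Finite.of_injective _ AffineEquiv.coeFn_injective
  have hAeq : A = (stabilizer (V ≃ₗ[k] V) v₀).comap AffineEquiv.linearHom := Subgroup.ext hA
  have hA'eq : A' = (stabilizer (V ≃ₗ[k] V) φ).comap AffineEquiv.linearHom :=
    Subgroup.ext fun f => by
      rw [hA', Subgroup.mem_comap, mem_stabilizer_iff, contragredient_smul_eq_iff_comp_eq,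
        LinearMap.ext_iff]
      rfl
  have hpow : 2 < Nat.card k ^ (finrank k V - 1) := by
    rw [Nat.card_eq_fintype_card, hq, hd]
    exact two_lt_pow_pred (hq ▸ Fintype.one_lt_card) hd2 hqd
  obtain ⟨a, ha⟩ : ∃ a, φ a ≠ 0 := by simpa using DFunLike.ne_iff.mp hφ
  refine ⟨gassmannEquivalent_of_conjCount_eq fun g => ?_, ?_⟩
  · rw [hAeq, hA'eq, conjCount_comap _ AffineEquiv.linearHom_surjective,
      conjCount_comap _ AffineEquiv.linearHom_surjective,
      conjCount_stabilizer_contragredient_eq hv₀ hφ]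
  · have hA'S : Subgroup.closure ((A' : Set _) ∩ {f | ∃ x, f x = x}) ≤ invariantSubgroup φ :=
      (Subgroup.closure_le _).2 fun f ⟨hf, _, hx₀⟩ =>
        mem_invariantSubgroup_of_apply_eq_self ((hA' f).1 hf) hx₀
    refine Subgroup.not_jumpEquivalent_of_subset_closure (t := AffineEquiv.constVAdd k V a)
      conjStable_setOf_exists_apply_eq (MonoidHom.normal_ker AffineEquiv.linearHom).conjStable
      (fun f hf => ker_linearHom_le_closure_inter_setOf_exists_apply_eq hpow
        (fun f => (hA f).2) hf.2)
      ((hA' _).2 fun _ => rfl) (MonoidHom.mem_ker.2 rfl) fun ht => ha ?_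
    simpa using hA'S ht 0
end

section
/- Let N = C₄ × C₂ = ⟨a, b : a⁴ = b² = 1, ab = ba⟩, let H = N × ⟨c : c² = 1⟩, and let H' = N ⋊ ⟨c : c² = 1⟩ where c acts on N by a ↦ a and b ↦ a²b; both H and H' have order 16. Then the images of H and H' under regular embeddings into the symmetric group Perm(Fin 16) are Gassmann-Sunada equivalent but NOT jump equivalent. In fact, the elements of order dividing 2 generate a subgroup of index 2 in H, whereas the elements of order dividing 2 generate all of H'. -/
/-- The regular embedding of a group `K` with a bijection `e : K ≃ Fin n` into the symmetric
group `Perm (Fin n)`: the action of `K` on itself by left multiplication, transported along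
`e`. -/
def regularEmbedding {K : Type*} [Group K] {n : ℕ} (e : K ≃ Fin n) :
    K →* Equiv.Perm (Fin n) where
  toFun k := (e.symm.trans (Equiv.mulLeft k)).trans e
  map_one' := by
    ext x
    simp
  map_mul' k k' := by
    ext x
    simp [mul_assoc]

/-- Hypotheses pinning down `H ≅ C₄ × C₂ × C₂ = ⟨a,b,c : a⁴ = b² = c² = 1, all commute⟩`:
a group of order 16 generated by elements `a, b, c` satisfying these relations is
isomorphic to `C₄ × C₂ × C₂`. -/
structure IsC4xC2xC2 {H : Type*} [Group H] (a b c : H) : Prop where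
  card : Nat.card H = 16
  ha : a ^ 4 = 1
  hb : b ^ 2 = 1
  hc : c ^ 2 = 1
  hab : a * b = b * a
  hac : a * c = c * a
  hbc : c * b = b * c
  gen : Subgroup.closure {a, b, c} = ⊤

/-- Hypotheses pinning down `H' ≅ (C₄ × C₂) ⋊ C₂ = ⟨a,b,c : a⁴ = b² = c² = 1, ab = ba,
ac = ca, cbc⁻¹ = a²b⟩`, the semidirect product in which `c` acts on `N = C₄ × C₂` by
`a ↦ a`, `b ↦ a²b`: a group of order 16 generated by elements `a, b, c` satisfying these
relations is isomorphic to this semidirect product. -/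
structure IsC4xC2SemidirectC2 {H : Type*} [Group H] (a b c : H) : Prop where
  card : Nat.card H = 16
  ha : a ^ 4 = 1
  hb : b ^ 2 = 1
  hc : c ^ 2 = 1
  hab : a * b = b * a
  hac : a * c = c * a
  hbc : c * b * c⁻¹ = a ^ 2 * b
  gen : Subgroup.closure {a, b, c} = ⊤

local notation "𝕋" => ZMod 4 × ZMod 2 × ZMod 2

open Function Subgroup

section RegularEmbedding

variable {G G' : Type*} [Group G] [Group G']

theorem regularEmbedding_apply {n : ℕ} (e : G ≃ Fin n) (g : G) (i : Fin n) :
    regularEmbedding e g i = e (g * e.symm i) := rfl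

theorem regularEmbedding_injective {n : ℕ} (e : G ≃ Fin n) :
    Injective (regularEmbedding e) := by
  intro g h hgh
  simpa [regularEmbedding_apply] using congr_arg (fun σ => e.symm (σ (e 1))) hgh

theorem Subgroup.bijective_mul_out_rightRel (K : Subgroup G) :
    Bijective fun p : K × Quotient (QuotientGroup.rightRel K) => (p.1 : G) * p.2.out := by
  let mk := Quotient.mk (QuotientGroup.rightRel K)
  have hmk (k : K) (q : Quotient (QuotientGroup.rightRel K)) : mk (k * q.out) = q :=
    (Quotient.sound (QuotientGroup.rightRel_apply.2 (by simp))).trans q.out_eq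
  refine ⟨fun ⟨k, q⟩ ⟨k', q'⟩ h => ?_,
    fun g => ⟨⟨⟨g * (mk g).out⁻¹, ?_⟩, mk g⟩, ?_⟩⟩
  · obtain rfl : q = q' := by simpa only [hmk] using congr_arg mk h
    exact Prod.ext (Subtype.ext (mul_right_cancel h)) rfl
  · exact QuotientGroup.rightRel_apply.1 (Quotient.exact (Quotient.out_eq _))
  · simp [mk]

theorem mem_zpowers_mk_self (x : G) (k : zpowers x) : k ∈ zpowers ⟨x, mem_zpowers x⟩ := by
  obtain ⟨m, hm⟩ := mem_zpowers_iff.1 k.2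
  exact ⟨m, Subtype.ext (by simpa using hm)⟩

theorem exists_mulEquiv_zpowers {x : G} {x' : G'} (h : orderOf x = orderOf x') :
    ∃ ι : zpowers x ≃* zpowers x', ι ⟨x, mem_zpowers x⟩ = ⟨x', mem_zpowers x'⟩ :=
  ⟨(zmodMulEquivOfGenerator (mem_zpowers_mk_self x) (Nat.card_zpowers x)).symm.trans
      (zmodMulEquivOfGenerator (mem_zpowers_mk_self x') ((Nat.card_zpowers x').trans h.symm)),
    by simp⟩

theorem exists_equiv_mul_left_eq [Finite G] [Finite G'] (hcard : Nat.card G = Nat.card G')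
    {x : G} {x' : G'} (h : orderOf x = orderOf x') :
    ∃ θ : G ≃ G', ∀ g, θ (x * g) = x' * θ g := by
  let E := Equiv.ofBijective _ (zpowers x).bijective_mul_out_rightRel
  let E' := Equiv.ofBijective _ (zpowers x').bijective_mul_out_rightRel
  have hQ : Nat.card (Quotient (QuotientGroup.rightRel (zpowers x))) =
      Nat.card (Quotient (QuotientGroup.rightRel (zpowers x'))) := by
    have := (Nat.card_congr E).trans (hcard.trans (Nat.card_congr E').symm)
    rw [Nat.card_prod, Nat.card_prod, Nat.card_zpowers, Nat.card_zpowers, h] at this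
    exact Nat.eq_of_mul_eq_mul_left (orderOf_pos x') this
  obtain ⟨q⟩ := Finite.card_eq.1 hQ
  obtain ⟨ι, hι⟩ := exists_mulEquiv_zpowers h
  refine ⟨E.symm.trans ((ι.toEquiv.prodCongr q).trans E'), fun g => ?_⟩
  obtain ⟨⟨k, c⟩, rfl⟩ := E.surjective g
  have hE : x * E (k, c) = E (⟨x, mem_zpowers x⟩ * k, c) := (mul_assoc _ _ _).symm
  simp only [Equiv.trans_apply, hE, Equiv.symm_apply_apply, Equiv.prodCongr_apply, Prod.map,
    MulEquiv.toEquiv_eq_coe, MulEquiv.coe_toEquiv, map_mul, hι]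
  exact mul_assoc _ _ _

theorem isConj_regularEmbedding {n : ℕ} (e : G ≃ Fin n) (e' : G' ≃ Fin n) {x : G} {x' : G'}
    (h : orderOf x = orderOf x') : IsConj (regularEmbedding e x) (regularEmbedding e' x') := by
  have := Finite.of_equiv _ e.symm
  have := Finite.of_equiv _ e'.symm
  obtain ⟨θ, hθ⟩ :=
    exists_equiv_mul_left_eq ((Nat.card_congr e).trans (Nat.card_congr e').symm) h
  refine isConj_iff.2 ⟨(e.symm.trans θ).trans e', Equiv.ext fun i => ?_⟩
  simp [regularEmbedding_apply, Equiv.Perm.inv_def, hθ]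

end RegularEmbedding

section ConjStable

variable {G : Type*} [Group G]

theorem ConjStable.mem_of_isConj_s14 {S : Set G} (hS : ConjStable S) {u v : G} (huv : IsConj u v)
    (hu : u ∈ S) : v ∈ S := by
  obtain ⟨g, rfl⟩ := isConj_iff.1 huv
  rw [← hS g]
  exact ⟨u, hu, rfl⟩

theorem conjStable_univ : ConjStable (Set.univ : Set G) :=
  fun g => Set.image_univ_of_surjective fun y => ⟨g⁻¹ * y * g, by group⟩

theorem conjStable_setOf_pow_eq_one (n : ℕ) : ConjStable {x : G | x ^ n = 1} := by
  intro g
  ext y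
  refine ⟨?_, fun hy => ⟨g⁻¹ * y * g, ?_, by group⟩⟩
  · rintro ⟨x, hx, rfl⟩
    simp_all [conj_pow]
  · have hy : y ^ n = 1 := hy
    simpa [hy] using conj_pow (a := g⁻¹) (b := y) (i := n)

end ConjStable

section Equivalences

variable {P K K' : Type*} [Group P] [Group K] [Group K']

theorem MonoidHom.ncard_range_inter {f : K →* P} (hf : Injective f) (S : Set P) :
    ((f.range : Set P) ∩ S).ncard = (f ⁻¹' S).ncard := by
  rw [MonoidHom.coe_range, ← Set.image_preimage_eq_range_inter, Set.ncard_image_of_injective _ hf]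

theorem gassmannEquivalent_range_regularEmbedding {n : ℕ} (e : K ≃ Fin n) (e' : K' ≃ Fin n)
    (β : K ≃ K') (hβ : ∀ g, orderOf (β g) = orderOf g) :
    GassmannEquivalent (regularEmbedding e).range (regularEmbedding e').range := by
  intro S hS
  have hpre : regularEmbedding e ⁻¹' S = β ⁻¹' (regularEmbedding e' ⁻¹' S) := by
    ext g
    exact ⟨hS.mem_of_isConj_s14 (isConj_regularEmbedding e e' (hβ g).symm),
      hS.mem_of_isConj_s14 (isConj_regularEmbedding e' e (hβ g))⟩
  rw [MonoidHom.ncard_range_inter (regularEmbedding_injective e),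
    MonoidHom.ncard_range_inter (regularEmbedding_injective e'), hpre,
    Set.ncard_preimage_of_injective_subset_range β.injective (by simp)]

theorem MonoidHom.closure_range_inter_setOf_pow_eq_one {f : K →* P} (hf : Injective f) (n : ℕ) :
    closure ((f.range : Set P) ∩ {y | y ^ n = 1}) = (closure {x : K | x ^ n = 1}).map f := by
  rw [MonoidHom.coe_range, ← Set.image_preimage_eq_range_inter, MonoidHom.map_closure]
  congr
  ext x
  simp [← map_pow, map_eq_one_iff f hf]

theorem not_jumpEquivalent_of_closure_setOf_pow_eq_one {f : K →* P} {f' : K' →* P}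
    (hf : Injective f) (hf' : Injective f') (n : ℕ) (h : closure {x : K | x ^ n = 1} ≠ ⊤)
    (h' : closure {x : K' | x ^ n = 1} = ⊤) : ¬ JumpEquivalent f.range f'.range := by
  intro hJ
  have := hJ _ _ (conjStable_setOf_pow_eq_one n) conjStable_univ
  simp only [Set.inter_univ, closure_eq, MonoidHom.closure_range_inter_setOf_pow_eq_one hf,
    MonoidHom.closure_range_inter_setOf_pow_eq_one hf', h', ← MonoidHom.range_eq_map,
    iff_true] at this
  exact h (map_injective hf (this.trans f.range_eq_map))

end Equivalences

section NormalForm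

variable {G : Type*} [Group G]

def normalForm (a b c : G) (t : 𝕋) : G :=
  a ^ t.1.val * b ^ t.2.1.val * c ^ t.2.2.val

def twistedMul (w : ZMod 4) (s t : 𝕋) : 𝕋 :=
  (s.1 + t.1 + w * ((s.2.2 * t.2.1).val : ZMod 4), s.2.1 + t.2.1, s.2.2 + t.2.2)

theorem normalForm_zero (a b c : G) : normalForm a b c 0 = 1 := by
  simp [normalForm]

theorem pow_zmod_val_add {x : G} {n : ℕ} [NeZero n] (hx : x ^ n = 1) (u v : ZMod n) :
    x ^ (u + v).val = x ^ u.val * x ^ v.val := by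
  rw [← pow_add, pow_eq_pow_mod (u.val + v.val) hx, ZMod.val_add]

theorem normalForm_mul {a b c : G} (ha : a ^ 4 = 1) (hb : b ^ 2 = 1) (hc : c ^ 2 = 1)
    (hab : Commute a b) (hac : Commute a c) {w : ZMod 4} (hcb : c * b = a ^ w.val * (b * c))
    (s t : 𝕋) :
    normalForm a b c s * normalForm a b c t = normalForm a b c (twistedMul w s t) := by
  obtain ⟨i, j, k⟩ := s
  obtain ⟨i', j', k'⟩ := t
  simp only [normalForm, twistedMul, pow_zmod_val_add ha, pow_zmod_val_add hb,
    pow_zmod_val_add hc]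
  set A := a ^ (w * ((k * j').val : ZMod 4)).val
  have hswap : c ^ k.val * b ^ j'.val = A * (b ^ j'.val * c ^ k.val) := by
    obtain rfl | rfl := (by decide : ∀ x : ZMod 2, x = 0 ∨ x = 1) k <;>
    obtain rfl | rfl := (by decide : ∀ x : ZMod 2, x = 0 ∨ x = 1) j' <;>
    simp [A, hcb, ZMod.val_one]
  have hA : Commute (b ^ j.val) A := (hab.pow_pow _ _).symm
  have hbc : Commute (b ^ j.val * c ^ k.val) (a ^ i'.val) :=
    ((hab.pow_pow _ _).symm.mul_left (hac.pow_pow _ _).symm)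
  calc a ^ i.val * b ^ j.val * c ^ k.val * (a ^ i'.val * b ^ j'.val * c ^ k'.val)
      = a ^ i.val * (b ^ j.val * c ^ k.val * a ^ i'.val) * b ^ j'.val * c ^ k'.val := by
        simp only [mul_assoc]
    _ = a ^ i.val * a ^ i'.val * b ^ j.val * (c ^ k.val * b ^ j'.val) * c ^ k'.val := by
        rw [hbc.eq]; simp only [mul_assoc]
    _ = a ^ i.val * a ^ i'.val * (b ^ j.val * A) * b ^ j'.val * (c ^ k.val * c ^ k'.val) := by
        rw [hswap]; simp only [mul_assoc]
    _ = _ := by rw [hA.eq]; simp only [mul_assoc]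

theorem normalForm_bijective {a b c : G} (hcard : Nat.card G = 16)
    (hgen : closure {a, b, c} = ⊤) (μ : 𝕋 → 𝕋 → 𝕋)
    (hμ : ∀ s t, normalForm a b c s * normalForm a b c t = normalForm a b c (μ s t)) :
    Bijective (normalForm a b c) := by
  have : Finite G := Nat.finite_of_card_ne_zero (by simp [hcard])
  refine Surjective.bijective_of_nat_card_le (fun g => ?_) (by simp [hcard])
  let M : Submonoid G :=
    { carrier := Set.range (normalForm a b c)
      mul_mem' := by
        rintro _ _ ⟨s, rfl⟩ ⟨t, rfl⟩
        exact ⟨μ s t, (hμ s t).symm⟩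
      one_mem' := ⟨0, normalForm_zero a b c⟩ }
  have hle : Submonoid.closure {a, b, c} ≤ M := by
    rw [Submonoid.closure_le]
    rintro x (rfl | rfl | rfl)
    exacts [⟨(1, 0, 0), by simp [normalForm, show (1 : ZMod 4).val = 1 from rfl]⟩,
      ⟨(0, 1, 0), by simp [normalForm, ZMod.val_one]⟩,
      ⟨(0, 0, 1), by simp [normalForm, ZMod.val_one]⟩]
  rw [← closure_toSubmonoid_of_finite, hgen] at hle
  exact hle (mem_top g)

end NormalForm

theorem orderOf_eq_orderOf_of_pow_four_eq_one {G G' : Type*} [Group G] [Group G'] {x : G}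
    {y : G'} (hx : x ^ 4 = 1) (hy : y ^ 4 = 1) (h1 : x = 1 ↔ y = 1)
    (h2 : x ^ 2 = 1 ↔ y ^ 2 = 1) : orderOf x = orderOf y := by
  obtain ⟨i, hi, hxi⟩ := (Nat.dvd_prime_pow Nat.prime_two).1
    (orderOf_dvd_of_pow_eq_one (n := 2 ^ 2) hx)
  obtain ⟨j, hj, hyj⟩ := (Nat.dvd_prime_pow Nat.prime_two).1
    (orderOf_dvd_of_pow_eq_one (n := 2 ^ 2) hy)
  rw [← orderOf_eq_one_iff (x := x), ← orderOf_eq_one_iff (x := y), hxi, hyj] at h1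
  rw [← orderOf_dvd_iff_pow_eq_one (x := x), ← orderOf_dvd_iff_pow_eq_one (x := y), hxi,
    hyj] at h2
  rw [hxi, hyj]
  interval_cases i <;> interval_cases j <;> simp_all

theorem CommGroup.index_closure_setOf_pow_eq_one {G : Type*} [CommGroup G] (n : ℕ) :
    (closure {x : G | x ^ n = 1}).index = Nat.card (Set.range fun x : G => x ^ n) := by
  have : {x : G | x ^ n = 1} = ((powMonoidHom n : G →* G).ker : Set G) := by
    ext
    simp
  rw [this, closure_eq, index_ker]
  rfl

section Todd

variable {H : Type*} [Group H] {a b c : H}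

theorem card_range_sq_multiplicative :
    Nat.card (Set.range fun x : Multiplicative 𝕋 => x ^ 2) = 2 := by
  rw [Nat.card_eq_card_toFinset, Set.toFinset_range]
  decide +kernel

def shearEquiv : 𝕋 ≃ 𝕋 where
  toFun t := (t.1 + ((t.2.1 * t.2.2).val : ZMod 4), t.2)
  invFun t := (t.1 - ((t.2.1 * t.2.2).val : ZMod 4), t.2)
  left_inv t := by simp
  right_inv t := by simp

namespace IsC4xC2xC2

theorem normalForm_mul (hH : IsC4xC2xC2 a b c) (s t : 𝕋) :
    normalForm a b c s * normalForm a b c t = normalForm a b c (s + t) := by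
  convert _root_.normalForm_mul hH.ha hH.hb hH.hc hH.hab hH.hac (w := 0)
    (by simpa using hH.hbc) s t
  simp [twistedMul]
  rfl

theorem nonempty_mulEquiv (hH : IsC4xC2xC2 a b c) : Nonempty (Multiplicative 𝕋 ≃* H) := by
  let f : Multiplicative 𝕋 →* H :=
    { toFun := fun t => normalForm a b c t.toAdd
      map_one' := normalForm_zero a b c
      map_mul' := fun s t => (hH.normalForm_mul s t).symm }
  exact ⟨MulEquiv.ofBijective f ((normalForm_bijective hH.card hH.gen _ hH.normalForm_mul).comp
    Multiplicative.toAdd.bijective)⟩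

theorem index_closure_setOf_sq_eq_one (hH : IsC4xC2xC2 a b c) :
    (closure {x : H | x ^ 2 = 1}).index = 2 := by
  obtain ⟨ψ⟩ := hH.nonempty_mulEquiv
  have := MonoidHom.closure_range_inter_setOf_pow_eq_one (f := (ψ : Multiplicative 𝕋 →* H))
    ψ.injective 2
  rw [MonoidHom.range_eq_top.2 ψ.surjective, coe_top, Set.univ_inter] at this
  rw [this, index_map_equiv, CommGroup.index_closure_setOf_pow_eq_one,
    card_range_sq_multiplicative]

end IsC4xC2xC2

namespace IsC4xC2SemidirectC2

theorem normalForm_mul (hH : IsC4xC2SemidirectC2 a b c) (s t : 𝕋) :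
    normalForm a b c s * normalForm a b c t = normalForm a b c (twistedMul 2 s t) := by
  refine _root_.normalForm_mul hH.ha hH.hb hH.hc hH.hab hH.hac ?_ s t
  show c * b = a ^ 2 * (b * c)
  rw [← mul_assoc, ← hH.hbc, inv_mul_cancel_right]

theorem normalForm_bijective (hH : IsC4xC2SemidirectC2 a b c) : Bijective (normalForm a b c) :=
  _root_.normalForm_bijective hH.card hH.gen _ hH.normalForm_mul

theorem closure_setOf_sq_eq_one (hH : IsC4xC2SemidirectC2 a b c) :
    closure {x : H | x ^ 2 = 1} = ⊤ := by
  have hmem (x : H) (hx : x ^ 2 = 1) : x ∈ closure {x : H | x ^ 2 = 1} := subset_closure hx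
  have habc : (a * b * c) ^ 2 = 1 := by
    have h111 : normalForm a b c (1, 1, 1) = a * b * c := by
      simp [normalForm, ZMod.val_one, show (1 : ZMod 4).val = 1 from rfl]
    rw [sq, ← h111, hH.normalForm_mul, (by decide : twistedMul 2 (1, 1, 1) (1, 1, 1) = 0),
      normalForm_zero]
  have ha : a = a * b * c * c * b := by
    rw [mul_assoc (a * b) c c, ← sq, hH.hc, mul_one, mul_assoc, ← sq, hH.hb, mul_one]
  rw [eq_top_iff, ← hH.gen, closure_le]
  rintro x (rfl | rfl | rfl)
  · rw [ha]
    exact mul_mem (mul_mem (hmem _ habc) (hmem _ hH.hc)) (hmem _ hH.hb)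
  · exact hmem _ hH.hb
  · exact hmem _ hH.hc

theorem orderOf_normalForm_shearEquiv (hH : IsC4xC2SemidirectC2 a b c) (t : 𝕋) :
    orderOf (normalForm a b c (shearEquiv t)) = orderOf (Multiplicative.ofAdd t) := by
  have hsq (s : 𝕋) : normalForm a b c s ^ 2 = normalForm a b c (twistedMul 2 s s) := by
    rw [sq, hH.normalForm_mul]
  have hone (s : 𝕋) : normalForm a b c s = 1 ↔ s = 0 := by
    rw [← normalForm_zero a b c, hH.normalForm_bijective.injective.eq_iff]
  refine orderOf_eq_orderOf_of_pow_four_eq_one ?_ ?_ ?_ ?_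
  · refine (pow_mul _ 2 2).trans ?_
    rw [hsq, hsq,
      (by decide : ∀ s : 𝕋, twistedMul 2 (twistedMul 2 s s) (twistedMul 2 s s) = 0),
      normalForm_zero]
  · revert t; decide
  · rw [hone]; revert t; decide
  · rw [hsq, hone]; revert t; decide

end IsC4xC2SemidirectC2

theorem exists_equiv_orderOf_eq {H' : Type*} [Group H'] {a' b' c' : H'}
    (hH : IsC4xC2xC2 a b c) (hH' : IsC4xC2SemidirectC2 a' b' c') :
    ∃ β : H ≃ H', ∀ x, orderOf (β x) = orderOf x := by
  obtain ⟨ψ⟩ := hH.nonempty_mulEquiv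
  refine ⟨ψ.symm.toEquiv.trans (Multiplicative.toAdd.trans (shearEquiv.trans
    (Equiv.ofBijective _ hH'.normalForm_bijective))), fun x => ?_⟩
  simp [hH'.orderOf_normalForm_shearEquiv]

end Todd

/-- with `H = (C₄ × C₂) × C₂` and `H' = (C₄ × C₂) ⋊ C₂` (Todd-type groups of
order 16, pinned down by generators and relations), the images of `H` and `H'` under regular
embeddings into `Perm (Fin 16)` are Gassmann-Sunada equivalent but NOT jump equivalent; in
fact the elements of order dividing 2 generate a subgroup of index 2 in `H`, whereas they
generate all of `H'`. -/
theorem todd_gassmann_not_jump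
    {H H' : Type*} [Group H] [Group H']
    (a b c : H) (hH : IsC4xC2xC2 a b c)
    (a' b' c' : H') (hH' : IsC4xC2SemidirectC2 a' b' c')
    (e : H ≃ Fin 16) (e' : H' ≃ Fin 16) :
    GassmannEquivalent (regularEmbedding e).range (regularEmbedding e').range ∧
    ¬ JumpEquivalent (regularEmbedding e).range (regularEmbedding e').range ∧
    (Subgroup.closure {x : H | x ^ 2 = 1}).index = 2 ∧
    Subgroup.closure {x : H' | x ^ 2 = 1} = ⊤ := by
  have hindex := hH.index_closure_setOf_sq_eq_one
  have htop := hH'.closure_setOf_sq_eq_one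
  obtain ⟨β, hβ⟩ := exists_equiv_orderOf_eq hH hH'
  refine ⟨gassmannEquivalent_range_regularEmbedding e e' β hβ,
    not_jumpEquivalent_of_closure_setOf_pow_eq_one (regularEmbedding_injective e)
      (regularEmbedding_injective e') 2 (fun h => ?_) htop, hindex, htop⟩
  rw [h, index_top] at hindex
  exact absurd hindex (by norm_num)
end
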